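/- arXiv:0711.0596 — 2 statements merged into one kernel-verified Lean document; each statement's English description precedes it below -/
import Mathlib

section
/- Let K be a field, let 0 < k < n, and let a_{k+1}, …, a_n be integers ≥ 1. Let S be the presented commutative monoid ⟨u₁,…,uₙ | u₁⋯u_k = u_{k+1}^{a_{k+1}}⋯u_n^{a_n}⟩, the quotient of (Fin n →₀ ℕ) by the additive congruence generated by the pair (e₁ + ⋯ + e_k, a_{k+1}·e_{k+1} + ⋯ + a_n·e_n), with quotient map π, and let R = AddMonoidAlgebra K S (this is a normal domain). For y ∈ {1,…,k} and z ∈ {k+1,…,n}, let P_{y,z} be the ideal of R generated by the two monomials X^{π(e_y)} and X^{π(e_z)}. Then P_{y,z} is a prime ideal of R of height 1. -/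
/-- The word `w₁ = e₁ + ⋯ + e_k` in the free abelian monoid `Fin n →₀ ℕ`. -/
noncomputable def wordOne (n k : ℕ) : Fin n →₀ ℕ :=
  Finsupp.equivFunOnFinite.symm fun i => if i.val < k then 1 else 0

/-- The word `w₂ = a_{k+1}·e_{k+1} + ⋯ + a_n·e_n` in the free abelian monoid `Fin n →₀ ℕ`. -/
noncomputable def wordTwo (n k : ℕ) (a : Fin n → ℕ) : Fin n →₀ ℕ :=
  Finsupp.equivFunOnFinite.symm fun i => if k ≤ i.val then a i else 0

/-!
The monoid `S` embeds into `ℤⁿ` (project along `w₁ - w₂` onto a coordinate hyperplane), so it is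
cancellative and torsion-free and `K[S]` is a domain. The map `π v ↦ a_z v_y + v_z` is an
`ℕ`-grading of `S`, and `P_{y,z}` is the irrelevant ideal of this grading, i.e. the kernel of the
projection onto degree `0`; hence it is prime.

If `Q ⊊ P` is prime, then `X^{e_z} ∉ Q`: otherwise
`X^{e_y} X^{w₁ - e_y} = (X^{e_z})^{a_z} X^{w₂ - e_z}` lies in `Q`, while `X^{e_y} ∉ Q` (else
`P ⊆ Q`) and `X^{w₁ - e_y} ∉ P` (it has degree `0`). Multiplying by a high power of
`X^{w₁ - e_y}` turns every monomial `X^s` into `(X^{e_z})^{deg s}` times a monomial of degree `0`,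
so a nonzero `x ∈ Q` becomes `(X^{e_z})^m x'` with `x' ∈ Q` having a nonzero coefficient in
degree `0`, contradicting `Q ⊆ P`. So `⊥` is the only prime strictly below `P`.
-/

namespace Finsupp

variable {ι : Type*} {w₁ w₂ : ι →₀ ℕ}

theorem le_of_add_nsmul_eq_add_nsmul (hd : Disjoint w₁.support w₂.support) {m : ℕ} {v v' : ι →₀ ℕ}
    (h : v + (m + 1) • w₂ = v' + (m + 1) • w₁) : w₂ ≤ v' := by
  intro i
  have hi := DFunLike.congr_fun h i
  by_cases h₂ : w₂ i = 0
  · simp [h₂]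
  · have h₁ : w₁ i = 0 := by
      by_contra h₁
      exact Finset.disjoint_left.mp hd (mem_support_iff.mpr h₁) (mem_support_iff.mpr h₂)
    simp only [coe_add, coe_smul, Pi.add_apply, Pi.smul_apply, smul_eq_mul, h₁, mul_zero,
      add_zero] at hi
    nlinarith

theorem _root_.AddCon.rel_of_add_nsmul_eq {c : AddCon (ι →₀ ℕ)} (hc : c w₁ w₂)
    (hd : Disjoint w₁.support w₂.support) :
    ∀ (m : ℕ) {v v' : ι →₀ ℕ}, v + m • w₂ = v' + m • w₁ → c v v'
  | 0, v, v', h => by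
    simp only [zero_smul, add_zero] at h
    exact h ▸ c.refl v
  | m + 1, v, v', h => by
    obtain ⟨v'', rfl⟩ := exists_add_of_le (le_of_add_nsmul_eq_add_nsmul hd h)
    have h' : v + m • w₂ = (v'' + w₁) + m • w₁ := by
      apply add_right_cancel (b := w₂)
      rw [add_assoc, ← succ_nsmul, h, succ_nsmul]
      abel
    refine c.trans (AddCon.rel_of_add_nsmul_eq hc hd m h') ?_
    rw [add_comm w₂]
    exact c.add (c.refl v'') hc

/-- The projection of `ℤ^ι` onto the hyperplane `x i₀ = 0` along `w₁ - w₂` (when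
`w₁ i₀ - w₂ i₀ = 1`), restricted to `ℕ^ι`. -/
noncomputable def projAlong (w₁ w₂ : ι →₀ ℕ) (i₀ : ι) : (ι →₀ ℕ) →+ (ι → ℤ) :=
  AddMonoidHom.mk' (fun v i => v i - ((w₁ i : ℤ) - w₂ i) * v i₀) fun v v' => by
    ext i; simp only [coe_add, Pi.add_apply, Nat.cast_add]; ring

theorem projAlong_apply (i₀ : ι) (v : ι →₀ ℕ) (i : ι) :
    projAlong w₁ w₂ i₀ v i = v i - ((w₁ i : ℤ) - w₂ i) * v i₀ := rfl

variable {i₀ : ι}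

theorem rel_of_projAlong_eq {c : AddCon (ι →₀ ℕ)} (hc : c w₁ w₂)
    (hd : Disjoint w₁.support w₂.support) {v v' : ι →₀ ℕ}
    (h : projAlong w₁ w₂ i₀ v = projAlong w₁ w₂ i₀ v') (hle : v' i₀ ≤ v i₀) : c v v' := by
  apply AddCon.rel_of_add_nsmul_eq hc hd (v i₀ - v' i₀)
  ext i
  have hi := congrFun h i
  simp only [projAlong_apply] at hi
  simp only [coe_add, coe_smul, Pi.add_apply, Pi.smul_apply, smul_eq_mul]
  zify [hle]
  linear_combination hi

theorem addConGen_eq_ker_projAlong (hd : Disjoint w₁.support w₂.support) (h₀ : w₁ i₀ = 1) :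
    addConGen (fun x y => x = w₁ ∧ y = w₂) = AddCon.ker (projAlong w₁ w₂ i₀) := by
  have hrel : addConGen (fun x y => x = w₁ ∧ y = w₂) w₁ w₂ := AddConGen.Rel.of _ _ ⟨rfl, rfl⟩
  have h₂ : w₂ i₀ = 0 := notMem_support_iff.mp (Finset.disjoint_left.mp hd (by simp [h₀]))
  refine le_antisymm (AddCon.addConGen_le.mpr ?_) fun v v' h => ?_
  · rintro x y ⟨rfl, rfl⟩
    ext i
    simp [projAlong_apply, h₀, h₂]
  · rcases le_total (v' i₀) (v i₀) with hle | hle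
    · exact rel_of_projAlong_eq hrel hd h hle
    · exact (rel_of_projAlong_eq hrel hd h.symm hle).symm

theorem _root_.AddCon.exists_mk'_eq_add_mk'_single (c : AddCon (ι →₀ ℕ)) {v : ι →₀ ℕ} {i : ι}
    (hv : v i ≠ 0) : ∃ d, c.mk' v = d + c.mk' (single i 1) :=
  ⟨_, by rw [← map_add, tsub_add_cancel_of_le (single_le_iff.mpr (Nat.one_le_iff_ne_zero.mpr hv))]⟩

end Finsupp

namespace AddMonoidAlgebra

open HomogeneousIdeal

variable {R S : Type*} [CommSemiring R] [AddCommMonoid S] (deg : S →+ ℕ)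

theorem coeff_projZeroRingHom_gradeBy (x : AddMonoidAlgebra R S) (s : S) :
    (GradedRing.projZeroRingHom (gradeBy R deg) x).coeff s =
      if deg s = 0 then x.coeff s else 0 := by
  induction x using AddMonoidAlgebra.induction_linear with
  | zero => simp
  | add f g hf hg => simp only [map_add, coeff_add, Finsupp.add_apply, hf, hg]; split_ifs <;> simp
  | single t r =>
    rw [GradedRing.projZeroRingHom_apply]
    by_cases ht : deg t = 0
    · rw [DirectSum.decompose_of_mem_same _ (ht ▸ single_mem_gradeBy deg t r)]
      split_ifs with hs
      · rfl
      · rw [coeff_single, Finsupp.single_eq_of_ne]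
        rintro rfl
        exact hs ht
    · rw [DirectSum.decompose_of_mem_ne _ (single_mem_gradeBy deg t r) ht]
      split_ifs with hs
      · rw [coeff_single, Finsupp.single_eq_of_ne]
        · rfl
        · rintro rfl
          exact ht hs
      · rfl

theorem mem_irrelevant_gradeBy_iff {x : AddMonoidAlgebra R S} :
    x ∈ (irrelevant (gradeBy R deg)).toIdeal ↔ ∀ s ∈ x.coeff.support, deg s ≠ 0 := by
  rw [toIdeal_irrelevant, RingHom.mem_ker]
  refine ⟨fun h s hs hdeg => Finsupp.mem_support_iff.mp hs ?_, fun h => ?_⟩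
  · have h' := congrArg (·.coeff s) h
    simp only [coeff_projZeroRingHom_gradeBy, hdeg, if_true, coeff_zero] at h'
    exact h'
  · ext s
    rw [coeff_projZeroRingHom_gradeBy]
    split_ifs with hs
    · exact Finsupp.notMem_support_iff.mp fun hm => h s hm hs
    · rfl

theorem of'_mem_irrelevant_gradeBy_iff [Nontrivial R] {s : S} :
    of' R S s ∈ (irrelevant (gradeBy R deg)).toIdeal ↔ deg s ≠ 0 := by
  rw [mem_irrelevant_gradeBy_iff, of'_apply, coeff_single,
    Finsupp.support_single _ one_ne_zero]
  simp

variable {deg}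

theorem exists_nsmul_add_eq_nsmul_add {u w : S} (hw : deg w = 0)
    (hS : ∀ s, ∃ N : ℕ, ∃ t, deg t = 0 ∧ s + N • w = deg s • u + t) (T : Finset S) :
    ∃ N : ℕ, ∀ s ∈ T, ∃ t, deg t = 0 ∧ s + N • w = deg s • u + t := by
  choose N t ht hst using hS
  refine ⟨∑ s ∈ T, N s, fun s hs => ⟨t s + (∑ s ∈ T, N s - N s) • w, by simp [ht, hw], ?_⟩⟩
  rw [← add_assoc, ← hst, add_assoc, ← add_nsmul,
    Nat.add_sub_cancel' (Finset.single_le_sum (fun _ _ => Nat.zero_le _) hs)]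

theorem eq_bot_of_le_irrelevant_gradeBy [IsCancelAdd S] {u w : S}
    (hw : deg w = 0) (hS : ∀ s, ∃ N : ℕ, ∃ t, deg t = 0 ∧ s + N • w = deg s • u + t)
    {Q : Ideal (AddMonoidAlgebra R S)} (hQ : Q.IsPrime)
    (hQle : Q ≤ (irrelevant (gradeBy R deg)).toIdeal) (huQ : of' R S u ∉ Q) : Q = ⊥ := by
  classical
  -- After multiplying by `X^{N • w}`, all monomials of `x` are divisible by `X^{m • u}`, `m` the
  -- least degree occurring in `x`; the quotient lies in `Q` and has a monomial of degree `0`.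
  refine (Submodule.eq_bot_iff Q).mpr fun x hxQ => ?_
  by_contra hx
  obtain ⟨N, hN⟩ := exists_nsmul_add_eq_nsmul_add hw hS x.coeff.support
  obtain ⟨s₀, hs₀, hmin⟩ := x.coeff.support.exists_min_image deg
    (Finsupp.support_nonempty_iff.mpr fun h => hx (AddMonoidAlgebra.ext h))
  obtain ⟨t₀, ht₀, hst₀⟩ := hN s₀ hs₀
  have hdiv : x * of' R S (N • w) ∈ Ideal.span {of' R S (deg s₀ • u)} := by
    rw [← Set.image_singleton, mem_ideal_span_of'_image]
    intro s hs
    obtain ⟨s', hs', rfl⟩ := Finset.mem_image.mp (support_coeff_mul_single_subset _ _ _ hs)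
    obtain ⟨t, -, hst⟩ := hN s' hs'
    refine ⟨_, rfl, (deg s' - deg s₀) • u + t, ?_⟩
    rw [hst, add_right_comm, ← add_nsmul, Nat.sub_add_cancel (hmin s' hs')]
  obtain ⟨x', hx'⟩ := Ideal.mem_span_singleton'.mp hdiv
  have hx'Q : x' ∈ Q := by
    have h : x' * of' R S u ^ deg s₀ ∈ Q := by
      rw [of'_apply, single_pow, one_pow, ← of'_apply, hx']
      exact Q.mul_mem_right _ hxQ
    exact (hQ.mem_or_mem h).resolve_right fun h => huQ (hQ.mem_of_pow_mem _ h)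
  have hcoeff : x'.coeff t₀ = x.coeff s₀ := calc
    x'.coeff t₀ = (x' * of' R S (deg s₀ • u)).coeff (t₀ + deg s₀ • u) := by simp [of'_apply]
    _ = (x * of' R S (N • w)).coeff (s₀ + N • w) := by rw [hx', hst₀, add_comm]
    _ = x.coeff s₀ := by simp [of'_apply]
  refine (mem_irrelevant_gradeBy_iff deg).mp (hQle hx'Q) t₀ ?_ ht₀
  rwa [Finsupp.mem_support_iff, hcoeff, ← Finsupp.mem_support_iff]

end AddMonoidAlgebra

section Presentation

open Finsupp

variable {n k : ℕ} {a : Fin n → ℕ}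

@[simp]
theorem wordOne_apply (i : Fin n) : wordOne n k i = if i.val < k then 1 else 0 := by
  simp [wordOne]

@[simp]
theorem wordTwo_apply (i : Fin n) : wordTwo n k a i = if k ≤ i.val then a i else 0 := by
  simp [wordTwo]

theorem disjoint_support_wordOne_wordTwo :
    Disjoint (wordOne n k).support (wordTwo n k a).support := by
  rw [Finset.disjoint_left]
  intro i h₁ h₂
  simp only [mem_support_iff, wordOne_apply, wordTwo_apply, ne_eq, ite_eq_right_iff] at h₁ h₂
  omega

noncomputable def presentationCon (n k : ℕ) (a : Fin n → ℕ) : AddCon (Fin n →₀ ℕ) :=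
  addConGen fun x y => x = wordOne n k ∧ y = wordTwo n k a

theorem presentationCon_wordOne_wordTwo :
    presentationCon n k a (wordOne n k) (wordTwo n k a) :=
  AddConGen.Rel.of _ _ ⟨rfl, rfl⟩

variable {i₀ : Fin n}

theorem presentationCon_eq_ker (hi₀ : i₀.val < k) :
    presentationCon n k a = AddCon.ker (projAlong (wordOne n k) (wordTwo n k a) i₀) :=
  addConGen_eq_ker_projAlong disjoint_support_wordOne_wordTwo (by simp [hi₀])

theorem injective_lift_projAlong (hi₀ : i₀.val < k) :
    Function.Injective ((presentationCon n k a).lift _ (presentationCon_eq_ker hi₀).le) := by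
  intro p q
  induction p, q using AddCon.induction_on₂ with
  | _ v v' =>
    intro h
    refine (presentationCon n k a).eq.mpr ?_
    rw [presentationCon_eq_ker hi₀]
    simpa using h

theorem isCancelAdd_quotient_presentationCon (hi₀ : i₀.val < k) :
    IsCancelAdd (presentationCon n k a).Quotient :=
  (injective_lift_projAlong hi₀).isCancelAdd _ (map_add _)

theorem uniqueSums_quotient_presentationCon (hi₀ : i₀.val < k) :
    UniqueSums (presentationCon n k a).Quotient :=
  .of_injective_addHom ((presentationCon n k a).lift _ (presentationCon_eq_ker hi₀).le).toAddHom
    (injective_lift_projAlong hi₀) inferInstance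

section Grading

variable {y z : Fin n}

theorem presentationCon_le_ker (hy : y.val < k) (hz : k ≤ z.val) :
    presentationCon n k a ≤
      AddCon.ker (a z • applyAddHom y + applyAddHom z : (Fin n →₀ ℕ) →+ ℕ) := by
  refine AddCon.addConGen_le.mpr ?_
  rintro _ _ ⟨rfl, rfl⟩
  simp [AddCon.ker_rel, hy, hz, not_le.mpr hy, not_lt.mpr hz]

theorem mk'_single_add_mk'_erase_wordOne (hy : y.val < k) (hz : k ≤ z.val) :
    (presentationCon n k a).mk' (single y 1) + (presentationCon n k a).mk' ((wordOne n k).erase y) =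
      a z • (presentationCon n k a).mk' (single z 1) +
        (presentationCon n k a).mk' ((wordTwo n k a).erase z) := by
  rw [← map_add, ← map_nsmul, ← map_add, Finsupp.smul_single, smul_eq_mul, mul_one]
  have h₁ : single y 1 = single y (wordOne n k y) := by simp [hy]
  have h₂ : single z (a z) = single z (wordTwo n k a z) := by simp [hz]
  rw [h₁, h₂, single_add_erase, single_add_erase]
  exact (presentationCon n k a).eq.mpr presentationCon_wordOne_wordTwo

variable (hy : y.val < k) (hz : k ≤ z.val)

noncomputable def presentationDeg : (presentationCon n k a).Quotient →+ ℕ :=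
  (presentationCon n k a).lift _ (presentationCon_le_ker hy hz)

@[simp]
theorem presentationDeg_mk' (v : Fin n →₀ ℕ) :
    presentationDeg hy hz ((presentationCon n k a).mk' v) = a z * v y + v z :=
  rfl

theorem presentationDeg_mk'_erase_wordOne :
    presentationDeg hy hz ((presentationCon n k a).mk' ((wordOne n k).erase y)) = 0 := by
  have hzy : z ≠ y := by rintro rfl; omega
  rw [presentationDeg_mk']
  simp [erase_ne hzy, not_lt.mpr hz]

theorem presentationDeg_mk'_erase_wordTwo :
    presentationDeg hy hz ((presentationCon n k a).mk' ((wordTwo n k a).erase z)) = 0 := by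
  have hyz : y ≠ z := by rintro rfl; omega
  rw [presentationDeg_mk']
  simp [erase_ne hyz, not_le.mpr hy]

theorem exists_nsmul_add_eq_presentationDeg_nsmul_add (s : (presentationCon n k a).Quotient) :
    ∃ N : ℕ, ∃ t, presentationDeg hy hz t = 0 ∧
      s + N • (presentationCon n k a).mk' ((wordOne n k).erase y) =
        presentationDeg hy hz s • (presentationCon n k a).mk' (single z 1) + t := by
  have hyz : y ≠ z := by rintro rfl; omega
  obtain ⟨v, rfl⟩ := (presentationCon n k a).mk'_surjective s
  set π := (presentationCon n k a).mk'
  set r := (v.erase y).erase z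
  have hv : π v = v y • π (single y 1) + (v z • π (single z 1) + π r) := by
    rw [← map_nsmul, ← map_nsmul, ← map_add, ← map_add, smul_single_one, smul_single_one]
    conv_lhs => rw [← single_add_erase y v, ← single_add_erase z (v.erase y), erase_ne hyz.symm]
  refine ⟨v y, v y • π ((wordTwo n k a).erase z) + π r, ?_, ?_⟩
  · rw [map_add, map_nsmul, presentationDeg_mk'_erase_wordTwo, presentationDeg_mk']
    simp [r, erase_ne hyz]
  · rw [presentationDeg_mk', hv]
    calc _ = v y • (π (single y 1) + π ((wordOne n k).erase y)) + (v z • π (single z 1) + π r) := by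
          module
      _ = _ := by
          rw [mk'_single_add_mk'_erase_wordOne hy hz]
          module

theorem presentationDeg_ne_zero_iff (haz : 0 < a z) (s : (presentationCon n k a).Quotient) :
    presentationDeg hy hz s ≠ 0 ↔
      (∃ d, s = d + (presentationCon n k a).mk' (single y 1)) ∨
        ∃ d, s = d + (presentationCon n k a).mk' (single z 1) := by
  have hyz : y ≠ z := by rintro rfl; omega
  refine ⟨fun h => ?_, ?_⟩
  · obtain ⟨v, rfl⟩ := (presentationCon n k a).mk'_surjective s
    rw [presentationDeg_mk'] at h
    by_cases hvy : v y = 0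
    · exact .inr ((presentationCon n k a).exists_mk'_eq_add_mk'_single (by simpa [hvy] using h))
    · exact .inl ((presentationCon n k a).exists_mk'_eq_add_mk'_single hvy)
  · rintro (⟨d, rfl⟩ | ⟨d, rfl⟩) <;>
      simp only [map_add, presentationDeg_mk', single_apply, if_pos, hyz, hyz.symm] <;> omega

end Grading

section Algebra

open AddMonoidAlgebra HomogeneousIdeal

variable {K : Type*} [CommSemiring K] {y z : Fin n} (hy : y.val < k) (hz : k ≤ z.val)

theorem span_eq_irrelevant_gradeBy_presentationDeg (haz : 0 < a z) :
    Ideal.span {of' K _ ((presentationCon n k a).mk' (Finsupp.single y 1)),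
        of' K _ ((presentationCon n k a).mk' (Finsupp.single z 1))} =
      (irrelevant (gradeBy K (presentationDeg hy hz))).toIdeal := by
  ext x
  rw [← Set.image_pair, mem_ideal_span_of'_image, mem_irrelevant_gradeBy_iff]
  refine forall₂_congr fun s _ => ?_
  rw [presentationDeg_ne_zero_iff hy hz haz]
  simp

theorem of'_mk'_single_notMem_of_lt_irrelevant [Nontrivial K] (haz : 0 < a z)
    {Q : Ideal (AddMonoidAlgebra K (presentationCon n k a).Quotient)} (hQ : Q.IsPrime)
    (hQP : Q < (irrelevant (gradeBy K (presentationDeg hy hz))).toIdeal) :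
    of' K _ ((presentationCon n k a).mk' (Finsupp.single z 1)) ∉ Q := by
  set π := (presentationCon n k a).mk'
  intro hzQ
  have hrel : of' K _ (π (Finsupp.single y 1)) * of' K _ (π ((wordOne n k).erase y)) =
      of' K _ (π (Finsupp.single z 1)) ^ a z * of' K _ (π ((wordTwo n k a).erase z)) := by
    simp only [of'_apply, single_mul_single, single_pow, one_pow, mul_one]
    rw [mk'_single_add_mk'_erase_wordOne hy hz]
  have hmem : of' K _ (π (Finsupp.single y 1)) * of' K _ (π ((wordOne n k).erase y)) ∈ Q :=
    hrel ▸ Q.mul_mem_right _ (Q.pow_mem_of_mem hzQ _ haz)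
  rcases hQ.mem_or_mem hmem with hyQ | hwQ
  · refine hQP.not_ge ?_
    rw [← span_eq_irrelevant_gradeBy_presentationDeg hy hz haz, Ideal.span_le]
    exact Set.insert_subset_iff.mpr ⟨hyQ, Set.singleton_subset_iff.mpr hzQ⟩
  · exact (of'_mem_irrelevant_gradeBy_iff _).mp (hQP.le hwQ)
      (presentationDeg_mk'_erase_wordOne hy hz)

end Algebra

end Presentation

theorem Set.chainHeight_singleton {α : Type*} (x : α) (r : α → α → Prop) :
    ({x} : Set α).chainHeight r = 1 := by
  rw [← encard_eq_chainHeight_of_isChain _ subsingleton_singleton.isChain, encard_singleton]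

theorem stmt4_general (K : Type*) [Field K] (n k : ℕ)
    (a : Fin n → ℕ) (ha : ∀ i : Fin n, k ≤ i.val → 1 ≤ a i)
    (c : AddCon (Fin n →₀ ℕ))
    (hc : c = addConGen (fun x y => x = wordOne n k ∧ y = wordTwo n k a))
    (y z : Fin n) (hy : y.val < k) (hz : k ≤ z.val)
    (P : Ideal (AddMonoidAlgebra K c.Quotient))
    (hP : P = Ideal.span
      {AddMonoidAlgebra.of' K c.Quotient (c.mk' (Finsupp.single y 1)),
       AddMonoidAlgebra.of' K c.Quotient (c.mk' (Finsupp.single z 1))}) :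
    P.IsPrime ∧
      Set.chainHeight {Q : Ideal (AddMonoidAlgebra K c.Quotient) | Q.IsPrime ∧ Q < P} = 1 := by
  obtain rfl : c = presentationCon n k a := hc
  have := isCancelAdd_quotient_presentationCon (a := a) hy
  have := uniqueSums_quotient_presentationCon (a := a) hy
  have hirr : P = (HomogeneousIdeal.irrelevant
      (AddMonoidAlgebra.gradeBy K (presentationDeg hy hz))).toIdeal :=
    hP.trans (span_eq_irrelevant_gradeBy_presentationDeg hy hz (ha z hz))
  have hP₀ : P ≠ ⊥ := by
    refine (Submodule.ne_bot_iff P).mpr ⟨_, hP ▸ Ideal.subset_span (Set.mem_insert _ _), ?_⟩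
    simp [AddMonoidAlgebra.of'_apply]
  have hbelow : {Q | Q.IsPrime ∧ Q < P} = {⊥} := by
    ext Q
    refine ⟨fun ⟨hQ, hQP⟩ => ?_, fun hQ => hQ ▸ ⟨Ideal.isPrime_bot, bot_lt_iff_ne_bot.mpr hP₀⟩⟩
    subst hirr
    exact AddMonoidAlgebra.eq_bot_of_le_irrelevant_gradeBy (presentationDeg_mk'_erase_wordOne hy hz)
      (exists_nsmul_add_eq_presentationDeg_nsmul_add hy hz) hQ hQP.le
      (of'_mk'_single_notMem_of_lt_irrelevant hy hz (ha z hz) hQ hQP)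
  refine ⟨?_, ?_⟩
  · rw [hirr, HomogeneousIdeal.toIdeal_irrelevant]
    exact RingHom.ker_isPrime _
  · rw [hbelow]
    funext r
    exact Set.chainHeight_singleton ⊥ r

theorem stmt4 (K : Type*) [Field K] (n k : ℕ) (hk : 0 < k) (hkn : k < n)
    (a : Fin n → ℕ) (ha : ∀ i : Fin n, k ≤ i.val → 1 ≤ a i)
    (c : AddCon (Fin n →₀ ℕ))
    (hc : c = addConGen (fun x y => x = wordOne n k ∧ y = wordTwo n k a))
    (y z : Fin n) (hy : y.val < k) (hz : k ≤ z.val)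
    (P : Ideal (AddMonoidAlgebra K c.Quotient))
    (hP : P = Ideal.span
      {AddMonoidAlgebra.of' K c.Quotient (c.mk' (Finsupp.single y 1)),
       AddMonoidAlgebra.of' K c.Quotient (c.mk' (Finsupp.single z 1))}) :
    P.IsPrime ∧
      Set.chainHeight {Q : Ideal (AddMonoidAlgebra K c.Quotient) | Q.IsPrime ∧ Q < P} = 1 :=
  stmt4_general K n k a ha c hc y z hy hz P hP
end

section
/- Let n ≥ 2 and let w₁, w₂, w₃, w₄ ∈ (Fin n →₀ ℕ) be nonzero words satisfying the independence hypothesis and conditions (a)–(d) of the two-relator normality criterion, and assume in addition that Hsupp(w₁) = ∅, Hsupp(w₃) = ∅, that supp(w₁) ∩ supp(w_l) = ∅ for every l ∈ {2,3,4}, and that |supp(w_k)| > 1 for k = 1,2,3,4. Let S be the quotient of (Fin n →₀ ℕ) by the additive congruence generated by (w₁, w₂) and (w₃, w₄), with quotient map π. Then for every s ∈ S there exist u ∈ supp(w₁), v ∈ supp(w₃) and a word x ∈ (Fin n →₀ ℕ) with x(u) = 0, x(v) = 0 and π(x) = s; that is, S is the union of the images of the submonoids generated by the generators other than u and v, as (u,v)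 ranges over supp(w₁) × supp(w₃). -/
/-- The support of a word in the free abelian monoid `Fin n →₀ ℕ`. -/
def supp {n : ℕ} (w : Fin n →₀ ℕ) : Set (Fin n) := {i | w i ≠ 0}

/-- `Hsupp w` is the set of generators occurring in `w` with exponent at least `2`;
`w` is square free iff `Hsupp w = ∅`. -/
def Hsupp {n : ℕ} (w : Fin n →₀ ℕ) : Set (Fin n) := {i | 2 ≤ w i}

/-- The supports of two words intersect nontrivially. -/
def Overlap {n : ℕ} (v w : Fin n →₀ ℕ) : Prop := supp v ∩ supp w ≠ ∅

/-- The two relations `w₁ = w₂` and `w₃ = w₄` are independent: neither is a consequence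
of the additive congruence generated by the other alone. -/
def IndependentRels {n : ℕ} (w₁ w₂ w₃ w₄ : Fin n →₀ ℕ) : Prop :=
  ¬ (addConGen fun x y => x = w₃ ∧ y = w₄) w₁ w₂ ∧
  ¬ (addConGen fun x y => x = w₁ ∧ y = w₂) w₃ w₄

/-- Condition (d) of the two-relator normality criterion, with
`O = {(i,j) : i ∈ {1,2}, j ∈ {3,4}, supp(wᵢ) ∩ supp(w_j) ≠ ∅}`:
either `O = ∅`; or `O` is a singleton `{(i,j)}` and `Hsupp(w_{i'}) = ∅` or
`Hsupp(w_{j'}) = ∅` for the complementary indices `i', j'`; or `O` consists of exactly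
two pairs sharing a common coordinate and the unique index `m` occurring in no pair of
`O` satisfies `Hsupp(w_m) = ∅`. -/
def CondD {n : ℕ} (w₁ w₂ w₃ w₄ : Fin n →₀ ℕ) : Prop :=
  -- O = ∅
  (¬ Overlap w₁ w₃ ∧ ¬ Overlap w₁ w₄ ∧ ¬ Overlap w₂ w₃ ∧ ¬ Overlap w₂ w₄) ∨
  -- O = {(i,j)} a singleton
  (Overlap w₁ w₃ ∧ ¬ Overlap w₁ w₄ ∧ ¬ Overlap w₂ w₃ ∧ ¬ Overlap w₂ w₄ ∧
    (Hsupp w₂ = ∅ ∨ Hsupp w₄ = ∅)) ∨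
  (¬ Overlap w₁ w₃ ∧ Overlap w₁ w₄ ∧ ¬ Overlap w₂ w₃ ∧ ¬ Overlap w₂ w₄ ∧
    (Hsupp w₂ = ∅ ∨ Hsupp w₃ = ∅)) ∨
  (¬ Overlap w₁ w₃ ∧ ¬ Overlap w₁ w₄ ∧ Overlap w₂ w₃ ∧ ¬ Overlap w₂ w₄ ∧
    (Hsupp w₁ = ∅ ∨ Hsupp w₄ = ∅)) ∨
  (¬ Overlap w₁ w₃ ∧ ¬ Overlap w₁ w₄ ∧ ¬ Overlap w₂ w₃ ∧ Overlap w₂ w₄ ∧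
    (Hsupp w₁ = ∅ ∨ Hsupp w₃ = ∅)) ∨
  -- O consists of exactly two pairs sharing a common coordinate
  (Overlap w₁ w₃ ∧ Overlap w₁ w₄ ∧ ¬ Overlap w₂ w₃ ∧ ¬ Overlap w₂ w₄ ∧ Hsupp w₂ = ∅) ∨
  (¬ Overlap w₁ w₃ ∧ ¬ Overlap w₁ w₄ ∧ Overlap w₂ w₃ ∧ Overlap w₂ w₄ ∧ Hsupp w₁ = ∅) ∨
  (Overlap w₁ w₃ ∧ ¬ Overlap w₁ w₄ ∧ Overlap w₂ w₃ ∧ ¬ Overlap w₂ w₄ ∧ Hsupp w₄ = ∅) ∨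
  (¬ Overlap w₁ w₃ ∧ Overlap w₁ w₄ ∧ ¬ Overlap w₂ w₃ ∧ Overlap w₂ w₄ ∧ Hsupp w₃ = ∅)

/-!
A word `y` is either `≥ w₁`, or, `w₁` being square free, it vanishes somewhere on `supp w₁`.
In the first case `y ~ y - w₁ + w₂`, and since `supp w₂` is disjoint from `supp w₁` this
strictly lowers the total exponent of `y` on `supp w₁`; so finitely many rewrites produce a
zero at some `u ∈ supp w₁`. Rewriting the result with `w₃ → w₄` in the same way produces a
zero at some `v ∈ supp w₃` and never raises the exponent at `u`, because `u ∉ supp w₄`.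
-/

lemma supp_eq_coe_support {n : ℕ} (w : Fin n →₀ ℕ) : supp w = w.support := by
  ext i
  simp [supp]

lemma Hsupp_eq_empty_iff {n : ℕ} (w : Fin n →₀ ℕ) : Hsupp w = ∅ ↔ ∀ i, w i ≤ 1 := by
  simp [Hsupp, Set.eq_empty_iff_forall_notMem]

lemma supp_inter_supp_eq_empty_iff {n : ℕ} (v w : Fin n →₀ ℕ) :
    supp v ∩ supp w = ∅ ↔ Disjoint v.support w.support := by
  rw [supp_eq_coe_support, supp_eq_coe_support, ← Finset.coe_inter, Finset.coe_eq_empty,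
    Finset.disjoint_iff_inter_eq_empty]

section Rewriting

variable {ι : Type*} (c : AddCon (ι →₀ ℕ)) {a b : ι →₀ ℕ}

lemma AddCon.rel_tsub_add_of_le (hab : c a b) {y : ι →₀ ℕ} (hay : a ≤ y) :
    c (y - a + b) y := by
  simpa [tsub_add_cancel_of_le hay] using c.add (c.refl (y - a)) (c.symm hab)

lemma sum_support_tsub_add_lt (ha : a ≠ 0) (hdisj : Disjoint a.support b.support)
    {y : ι →₀ ℕ} (hay : a ≤ y) :
    ∑ i ∈ a.support, (y - a + b) i < ∑ i ∈ a.support, y i := by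
  have hsplit : ∑ i ∈ a.support, (y - a + b) i + ∑ i ∈ a.support, a i =
      ∑ i ∈ a.support, y i := by
    rw [← Finset.sum_add_distrib]
    refine Finset.sum_congr rfl fun i hi => ?_
    have hbi : b i = 0 := Finsupp.notMem_support_iff.1 (Finset.disjoint_left.1 hdisj hi)
    simp [hbi, tsub_add_cancel_of_le (hay i)]
  have hpos : 0 < ∑ i ∈ a.support, a i :=
    Finset.sum_pos (fun i hi => Nat.pos_of_ne_zero (Finsupp.mem_support_iff.1 hi))
      (Finsupp.support_nonempty_iff.2 ha)
  omega

theorem AddCon.exists_rel_apply_eq_zero (hab : c a b) (ha : a ≠ 0) (hsq : ∀ i, a i ≤ 1)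
    (hdisj : Disjoint a.support b.support) (y : ι →₀ ℕ) :
    ∃ z, c z y ∧ (∃ u ∈ a.support, z u = 0) ∧ ∀ i ∉ b.support, z i ≤ y i := by
  induction hN : ∑ i ∈ a.support, y i using Nat.strong_induction_on generalizing y with
  | _ N ih =>
  by_cases hay : a ≤ y
  · obtain ⟨z, hz, hzero, hmono⟩ :=
      ih _ (hN ▸ sum_support_tsub_add_lt ha hdisj hay) (y - a + b) rfl
    refine ⟨z, c.trans hz (c.rel_tsub_add_of_le hab hay), hzero, fun i hi => ?_⟩
    have hbi : b i = 0 := Finsupp.notMem_support_iff.1 hi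
    simpa [hbi] using (hmono i hi).trans (by simp [hbi])
  · obtain ⟨u, hu⟩ : ∃ u, y u < a u := by simpa [Finsupp.le_def] using hay
    have := hsq u
    exact ⟨y, c.refl y, ⟨u, Finsupp.mem_support_iff.2 (by omega), by omega⟩,
      fun _ _ => le_rfl⟩

end Rewriting

theorem stmt11_general (n : ℕ)
    (w₁ w₂ w₃ w₄ : Fin n →₀ ℕ)
    (h₁ : w₁ ≠ 0) (h₃ : w₃ ≠ 0)
    (ha : supp w₁ ∩ supp w₂ = ∅ ∧ supp w₃ ∩ supp w₄ = ∅)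
    (hsf₁ : Hsupp w₁ = ∅) (hsf₃ : Hsupp w₃ = ∅)
    (hdisj₄ : supp w₁ ∩ supp w₄ = ∅)
    (c : AddCon (Fin n →₀ ℕ))
    (hc : c = addConGen (fun x y => (x = w₁ ∧ y = w₂) ∨ (x = w₃ ∧ y = w₄))) :
    ∀ s : c.Quotient, ∃ u ∈ supp w₁, ∃ v ∈ supp w₃, ∃ x : Fin n →₀ ℕ,
      x u = 0 ∧ x v = 0 ∧ c.mk' x = s := by
  intro s
  obtain ⟨y, rfl⟩ := AddCon.mk'_surjective s
  have hrel₁ : c w₁ w₂ := hc ▸ AddConGen.Rel.of _ _ (Or.inl ⟨rfl, rfl⟩)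
  have hrel₃ : c w₃ w₄ := hc ▸ AddConGen.Rel.of _ _ (Or.inr ⟨rfl, rfl⟩)
  obtain ⟨z₁, hz₁, ⟨u, hu, hz₁u⟩, -⟩ := c.exists_rel_apply_eq_zero hrel₁ h₁
    ((Hsupp_eq_empty_iff w₁).1 hsf₁) ((supp_inter_supp_eq_empty_iff w₁ w₂).1 ha.1) y
  obtain ⟨z₂, hz₂, ⟨v, hv, hz₂v⟩, hmono⟩ := c.exists_rel_apply_eq_zero hrel₃ h₃
    ((Hsupp_eq_empty_iff w₃).1 hsf₃) ((supp_inter_supp_eq_empty_iff w₃ w₄).1 ha.2) z₁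
  have hu₄ : u ∉ w₄.support :=
    Finset.disjoint_left.1 ((supp_inter_supp_eq_empty_iff w₁ w₄).1 hdisj₄) hu
  refine ⟨u, by simpa [supp_eq_coe_support] using hu, v, by simpa [supp_eq_coe_support] using hv,
    z₂, by simpa [hz₁u] using hmono u hu₄, hz₂v, (AddCon.eq c).2 (c.trans hz₂ hz₁)⟩

theorem stmt11 (n : ℕ) (hn : 2 ≤ n)
    (w₁ w₂ w₃ w₄ : Fin n →₀ ℕ)
    (h₁ : w₁ ≠ 0) (h₂ : w₂ ≠ 0) (h₃ : w₃ ≠ 0) (h₄ : w₄ ≠ 0)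
    (hind : IndependentRels w₁ w₂ w₃ w₄)
    (ha : supp w₁ ∩ supp w₂ = ∅ ∧ supp w₃ ∩ supp w₄ = ∅)
    (hb : Hsupp w₁ = ∅ ∨ Hsupp w₂ = ∅)
    (hcnd : Hsupp w₃ = ∅ ∨ Hsupp w₄ = ∅)
    (hd : CondD w₁ w₂ w₃ w₄)
    (hsf₁ : Hsupp w₁ = ∅) (hsf₃ : Hsupp w₃ = ∅)
    (hdisj₂ : supp w₁ ∩ supp w₂ = ∅)
    (hdisj₃ : supp w₁ ∩ supp w₃ = ∅)
    (hdisj₄ : supp w₁ ∩ supp w₄ = ∅)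
    (hbig : 1 < (supp w₁).ncard ∧ 1 < (supp w₂).ncard ∧
      1 < (supp w₃).ncard ∧ 1 < (supp w₄).ncard)
    (c : AddCon (Fin n →₀ ℕ))
    (hc : c = addConGen (fun x y => (x = w₁ ∧ y = w₂) ∨ (x = w₃ ∧ y = w₄))) :
    ∀ s : c.Quotient, ∃ u ∈ supp w₁, ∃ v ∈ supp w₃, ∃ x : Fin n →₀ ℕ,
      x u = 0 ∧ x v = 0 ∧ c.mk' x = s :=
  stmt11_general n w₁ w₂ w₃ w₄ h₁ h₃ ha hsf₁ hsf₃ hdisj₄ c hc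
end
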